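/- arXiv:1312.2369 — 4 statements merged into one kernel-verified Lean document; each statement's English description precedes it below -/
import Mathlib

section
/- Let (Ω, μ) be a probability space, θ ≥ 0, N : Ω → ℕ a random variable with Poisson(θ) law, i.e. μ({N = n}) = e^{−θ} θ^n / n! for every n, and (Y_i)_{i∈ℕ} real-valued random variables such that the family (N, Y_0, Y_1, …) is mutually independent and the Y_i are identically distributed with common cumulative distribution function F(t) = μ({Y_0 ≤ t}). Then for every t ∈ ℝ, μ({ω : Y_i(ω) > t for every i < N(ω)}) = exp(−θ F(t)). -/
/-!
Split the event according to the value of `N`. By independence, the fibre `{N = n}` contributes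
`μ {N = n} · μ {Y₀ > t} ^ n = e^{-θ} θⁿ / n! · (1 - F t) ^ n`, and summing over `n` evaluates the
probability generating function `z ↦ e^{θ (z - 1)}` of the Poisson law at `z = 1 - F t`.
-/

open MeasureTheory ProbabilityTheory Set Function

section

variable {Ω : Type*} [MeasurableSpace Ω] {μ : Measure Ω}

theorem measure_preimage_inter_biInter_eq_mul_prod {α β : Type} [MeasurableSpace α]
    [MeasurableSpace β] (X : Ω → α) (Y : ℕ → Ω → β)
    (hindep : iIndepFun (m :=
      fun j : Option ℕ => Option.rec (motive := fun j : Option ℕ =>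
          MeasurableSpace (Option.rec (motive := fun _ => Type) α (fun _ => β) j))
        (inferInstance : MeasurableSpace α) (fun _ => (inferInstance : MeasurableSpace β)) j)
      (fun j : Option ℕ => Option.rec (motive := fun j : Option ℕ =>
          Ω → Option.rec (motive := fun _ => Type) α (fun _ => β) j)
        X (fun i => Y i) j) μ)
    {A : Set α} (hA : MeasurableSet A) {B : ℕ → Set β} (hB : ∀ i, MeasurableSet (B i))
    (I : Finset ℕ) :
    μ (X ⁻¹' A ∩ ⋂ i ∈ I, Y i ⁻¹' B i) = μ (X ⁻¹' A) * ∏ i ∈ I, μ (Y i ⁻¹' B i) := by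
  classical
  have key := hindep.measure_inter_preimage_eq_mul (insert none (I.image some))
    (sets := fun j => Option.rec A B j)
    (fun j _ => match j with
      | none => hA
      | some i => hB i)
  rwa [Finset.prod_insert (by simp), Finset.prod_image (fun _ _ _ _ => Option.some_inj.mp),
    Finset.set_biInter_insert, Finset.set_biInter_finset_image] at key

theorem measure_setOf_mem_eq_tsum_fiber {N : Ω → ℕ} (hN : Measurable N) {s : ℕ → Set Ω}
    (hs : ∀ n, MeasurableSet (s n)) :
    μ {ω | ω ∈ s (N ω)} = ∑' n, μ (N ⁻¹' {n} ∩ s n) := by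
  have hdisj : Pairwise (Disjoint on fun n => N ⁻¹' {n} ∩ s n) := fun m n hmn =>
    (pairwise_disjoint_fiber N hmn).mono inter_subset_left inter_subset_left
  rw [← measure_iUnion hdisj fun n => (hN (measurableSet_singleton n)).inter (hs n)]
  congr 1
  ext ω
  simp

theorem measure_preimage_Ioi_eq_ofReal_one_sub [IsProbabilityMeasure μ] {X : Ω → ℝ}
    (hX : Measurable X) (t : ℝ) :
    μ (X ⁻¹' Ioi t) = ENNReal.ofReal (1 - (μ {ω | X ω ≤ t}).toReal) := by
  rw [← measureReal_def, ← probReal_compl_eq_one_sub (measurableSet_le hX measurable_const),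
    ofReal_measureReal]
  congr 1
  ext ω
  simp

end

theorem hasSum_poisson_mul_pow (θ z : ℝ) :
    HasSum (fun n : ℕ => Real.exp (-θ) * θ ^ n / n.factorial * z ^ n)
      (Real.exp (θ * (z - 1))) := by
  have hterm : (fun n : ℕ => Real.exp (-θ) * θ ^ n / n.factorial * z ^ n) =
      fun n => Real.exp (-θ) * ((θ * z) ^ n / n.factorial) := by
    funext n
    ring
  rw [hterm, show θ * (z - 1) = -θ + θ * z by ring, Real.exp_add, Real.exp_eq_exp_ℝ]
  exact (NormedSpace.expSeries_div_hasSum_exp (θ * z)).mul_left _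

/-- Promotion time cure model: if `N` has a Poisson(θ) law, the `Y_i` are identically
distributed with cumulative distribution function `F(t) = μ({Y₀ ≤ t})`, and the family
`(N, Y₀, Y₁, …)` is mutually independent, then for every `t`,
`μ({ω : Y_i(ω) > t for every i < N(ω)}) = exp(−θ F(t))`. -/
theorem promotion_time_survival {Ω : Type*} [MeasurableSpace Ω] (μ : Measure Ω)
    [IsProbabilityMeasure μ] (θ : ℝ) (hθ : 0 ≤ θ)
    (N : Ω → ℕ) (Y : ℕ → Ω → ℝ) (hNmeas : Measurable N) (hYmeas : ∀ i, Measurable (Y i))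
    (hlaw : ∀ n : ℕ, μ {ω | N ω = n} = ENNReal.ofReal (Real.exp (-θ) * θ ^ n / n.factorial))
    (hident : ∀ i : ℕ, ∀ t : ℝ, μ {ω | Y i ω ≤ t} = μ {ω | Y 0 ω ≤ t})
    (hindep : iIndepFun (m :=
      fun j : Option ℕ => Option.rec (motive := fun j : Option ℕ =>
          MeasurableSpace (Option.rec (motive := fun _ => Type) ℕ (fun _ => ℝ) j))
        (inferInstance : MeasurableSpace ℕ) (fun _ => (inferInstance : MeasurableSpace ℝ)) j)
      (fun j : Option ℕ => Option.rec (motive := fun j : Option ℕ =>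
          Ω → Option.rec (motive := fun _ => Type) ℕ (fun _ => ℝ) j)
        N (fun i => Y i) j) μ) :
    ∀ t : ℝ, μ {ω | ∀ i < N ω, t < Y i ω} =
      ENNReal.ofReal (Real.exp (-θ * (μ {ω | Y 0 ω ≤ t}).toReal)) := by
  intro t
  set F := (μ {ω | Y 0 ω ≤ t}).toReal
  have hF : 0 ≤ 1 - F :=
    sub_nonneg.mpr (ENNReal.toReal_le_of_le_ofReal zero_le_one (by simpa using prob_le_one))
  have hsurvival : ∀ i, μ (Y i ⁻¹' Ioi t) = ENNReal.ofReal (1 - F) := fun i => by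
    rw [measure_preimage_Ioi_eq_ofReal_one_sub (hYmeas i), hident]
  have hfiber : ∀ n, μ (N ⁻¹' {n} ∩ ⋂ i ∈ Finset.range n, Y i ⁻¹' Ioi t) =
      ENNReal.ofReal (Real.exp (-θ) * θ ^ n / n.factorial * (1 - F) ^ n) := fun n => by
    rw [measure_preimage_inter_biInter_eq_mul_prod N Y hindep (measurableSet_singleton n)
      (fun _ => measurableSet_Ioi), Finset.prod_congr rfl fun i _ => hsurvival i,
      Finset.prod_const, Finset.card_range, ← ENNReal.ofReal_pow hF,
      ENNReal.ofReal_mul (by positivity), ← hlaw n]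
    rfl
  have hevent : {ω | ∀ i < N ω, t < Y i ω} =
      {ω | ω ∈ ⋂ i ∈ Finset.range (N ω), Y i ⁻¹' Ioi t} := by
    ext ω
    simp
  rw [hevent, measure_setOf_mem_eq_tsum_fiber hNmeas
      (fun n => Finset.measurableSet_biInter _ fun i _ => measurableSet_Ioi.preimage (hYmeas i)),
    tsum_congr hfiber, ← ENNReal.ofReal_tsum_of_nonneg (fun n => by positivity)
      (hasSum_poisson_mul_pow θ (1 - F)).summable,
    (hasSum_poisson_mul_pow θ (1 - F)).tsum_eq]
  congr 2
  ring
end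

section
/- Let n, m ≥ 1. Let 𝒳 ⊆ ℝⁿ be such that the set {(1, x) : x ∈ 𝒳} spans ℝ × ℝⁿ, and 𝒵 ⊆ ℝᵐ be such that {(1, z) : z ∈ 𝒵} spans ℝ × ℝᵐ. Let β₀, β̃₀ ∈ ℝ, β, β̃ ∈ ℝⁿ, γ, γ̃ ∈ ℝᵐ, and let S₀, S̃₀ : ℝ → ℝ satisfy 0 ≤ S₀(t) ≤ 1 and 0 ≤ S̃₀(t) ≤ 1 for all t, S₀(t) → 0 and S̃₀(t) → 0 as t → ∞, and suppose there exists t₀ with 0 < S₀(t₀) < 1. If exp(β₀ + ⟨x, β⟩) · (1 − S₀(t)^{exp(⟨z, γ⟩)}) = exp(β̃₀ + ⟨x, β̃⟩) · (1 − S̃₀(t)^{exp(⟨z, γ̃⟩)}) for every x ∈ 𝒳, z ∈ 𝒵 and t ∈ ℝ, then β₀ = β̃₀, β = β̃, γ = γ̃, and S₀(t) = S̃₀(t) for all t. -/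
/-!
Letting `t → ∞` kills the survival powers, so `exp (β₀ + ⟪x, β⟫) = exp (β₀' + ⟪x, β'⟫)` on `𝒳`,
and the spanning condition forces `β₀ = β₀'`, `β = β'`. Cancelling the exponential factor leaves
`S₀ t ^ exp ⟪z, γ⟫ = S₀' t ^ exp ⟪z, γ'⟫`; at a time `t₀` with `0 < S₀ t₀ < 1`, the
complementary log-log transform `s ↦ log (-log s)` turns this into an affine identity in `z`,
so the spanning condition on `𝒵` gives `γ = γ'`, after which `S₀ = S₀'` by injectivity of
`s ↦ s ^ p` on `[0, ∞)`.
-/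

open RealInnerProductSpace Filter

theorem Set.Nonempty.of_span_image_one_prod_eq_top {R M : Type*} [Semiring R] [Nontrivial R]
    [AddCommMonoid M] [Module R M] {S : Set M}
    (hS : Submodule.span R ((fun x => ((1 : R), x)) '' S) = ⊤) : S.Nonempty := by
  by_contra hempty
  rw [Set.not_nonempty_iff_eq_empty.mp hempty, Set.image_empty, Submodule.span_empty] at hS
  exact bot_ne_top hS

theorem eq_of_forall_add_inner_eq {E : Type*} [NormedAddCommGroup E] [InnerProductSpace ℝ E]
    {S : Set E} (hS : Submodule.span ℝ ((fun x => ((1 : ℝ), x)) '' S) = ⊤)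
    {c c' : ℝ} {v v' : E} (h : ∀ x ∈ S, c + ⟪x, v⟫ = c' + ⟪x, v'⟫) : c = c' ∧ v = v' := by
  let L : ℝ → E → ℝ × E →ₗ[ℝ] ℝ := fun c v =>
    (LinearMap.toSpanSingleton ℝ ℝ c).coprod (innerₛₗ ℝ v)
  have hL : L c v = L c' v' := by
    refine LinearMap.ext_on hS ?_
    rintro _ ⟨x, hx, rfl⟩
    simpa [L, real_inner_comm] using h x hx
  refine ⟨by simpa [L] using LinearMap.congr_fun hL (1, 0), ext_inner_right ℝ fun y => ?_⟩
  simpa [L] using LinearMap.congr_fun hL (0, y)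

theorem tendsto_mul_one_sub_rpow {α : Type*} {l : Filter α} {S : α → ℝ}
    (hS : Tendsto S l (nhds 0)) (c : ℝ) {p : ℝ} (hp : 0 < p) :
    Tendsto (fun t => c * (1 - S t ^ p)) l (nhds c) := by
  simpa using ((tendsto_const_nhds (x := (1 : ℝ))).sub (hS.rpow_const_nhds_zero hp)).const_mul c

theorem log_neg_log_add_eq_of_rpow_exp_eq {s s' u u' : ℝ} (hs : 0 < s) (hs1 : s < 1)
    (hs' : 0 ≤ s') (h : s ^ Real.exp u = s' ^ Real.exp u') :
    Real.log (-Real.log s) + u = Real.log (-Real.log s') + u' := by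
  have hpos : 0 < s' := by
    refine hs'.lt_of_ne fun h0 => ?_
    rw [← h0, Real.zero_rpow (Real.exp_pos u').ne'] at h
    exact (Real.rpow_pos_of_pos hs _).ne' h
  have hlog : Real.exp u * -Real.log s = Real.exp u' * -Real.log s' := by
    have := congrArg Real.log h
    rw [Real.log_rpow hs, Real.log_rpow hpos] at this
    linarith
  have hneg : 0 < -Real.log s := neg_pos.mpr (Real.log_neg hs hs1)
  have hneg' : -Real.log s' ≠ 0 := by
    intro h0
    rw [h0, mul_zero] at hlog
    exact (mul_pos (Real.exp_pos u) hneg).ne' hlog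
  have := congrArg Real.log hlog
  rw [Real.log_mul (Real.exp_ne_zero u) hneg.ne', Real.log_mul (Real.exp_ne_zero u') hneg',
    Real.log_exp, Real.log_exp] at this
  linarith

theorem promotion_time_identifiability_general (n m : ℕ)
    (X : Set (EuclideanSpace ℝ (Fin n))) (Z : Set (EuclideanSpace ℝ (Fin m)))
    (hX : Submodule.span ℝ ((fun x => ((1 : ℝ), x)) '' X) = ⊤)
    (hZ : Submodule.span ℝ ((fun z => ((1 : ℝ), z)) '' Z) = ⊤)
    (β₀ β₀' : ℝ) (β β' : EuclideanSpace ℝ (Fin n)) (γ γ' : EuclideanSpace ℝ (Fin m))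
    (S₀ S₀' : ℝ → ℝ)
    (hS₀ : ∀ t, 0 ≤ S₀ t ∧ S₀ t ≤ 1) (hS₀' : ∀ t, 0 ≤ S₀' t ∧ S₀' t ≤ 1)
    (hlim : Tendsto S₀ atTop (nhds 0)) (hlim' : Tendsto S₀' atTop (nhds 0))
    (ht₀ : ∃ t₀ : ℝ, 0 < S₀ t₀ ∧ S₀ t₀ < 1)
    (heq : ∀ x ∈ X, ∀ z ∈ Z, ∀ t : ℝ,
      Real.exp (β₀ + ⟪x, β⟫) * (1 - S₀ t ^ Real.exp ⟪z, γ⟫) =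
      Real.exp (β₀' + ⟪x, β'⟫) * (1 - S₀' t ^ Real.exp ⟪z, γ'⟫)) :
    β₀ = β₀' ∧ β = β' ∧ γ = γ' ∧ ∀ t, S₀ t = S₀' t := by
  obtain ⟨t₀, ht₀_pos, ht₀_lt⟩ := ht₀
  obtain ⟨x₀, hx₀⟩ := Set.Nonempty.of_span_image_one_prod_eq_top hX
  obtain ⟨z₀, hz₀⟩ := Set.Nonempty.of_span_image_one_prod_eq_top hZ
  have hcure : ∀ x ∈ X, β₀ + ⟪x, β⟫ = β₀' + ⟪x, β'⟫ := fun x hx =>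
    Real.exp_injective <| tendsto_nhds_unique
      (by simpa only [heq x hx z₀ hz₀] using
        tendsto_mul_one_sub_rpow hlim (Real.exp (β₀ + ⟪x, β⟫)) (Real.exp_pos ⟪z₀, γ⟫))
      (tendsto_mul_one_sub_rpow hlim' _ (Real.exp_pos _))
  obtain ⟨rfl, rfl⟩ := eq_of_forall_add_inner_eq hX hcure
  have hpow : ∀ z ∈ Z, ∀ t, S₀ t ^ Real.exp ⟪z, γ⟫ = S₀' t ^ Real.exp ⟪z, γ'⟫ := by
    intro z hz t
    have := mul_left_cancel₀ (Real.exp_ne_zero _) (heq x₀ hx₀ z hz t)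
    linarith
  obtain ⟨-, rfl⟩ := eq_of_forall_add_inner_eq hZ fun z hz =>
    log_neg_log_add_eq_of_rpow_exp_eq ht₀_pos ht₀_lt (hS₀' t₀).1 (hpow z hz t₀)
  exact ⟨rfl, rfl, rfl, fun t =>
    (Real.rpow_left_inj (hS₀ t).1 (hS₀' t).1 (Real.exp_ne_zero _)).mp (hpow z₀ hz₀ t)⟩

/-- Part 1 of the paper's Lemma 1: identifiability of the promotion time cure model
when the follow up is sufficiently long.  If
`exp(β₀+⟨x,β⟩)(1 − S₀(t)^{exp(⟨z,γ⟩)}) = exp(β̃₀+⟨x,β̃⟩)(1 − S̃₀(t)^{exp(⟨z,γ̃⟩)})`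
for all `x ∈ 𝒳`, `z ∈ 𝒵`, `t`, where the designs span and the baseline cumulative
distributions are proper, then all parameters coincide. -/
theorem promotion_time_identifiability (n m : ℕ) (hn : 1 ≤ n) (hm : 1 ≤ m)
    (X : Set (EuclideanSpace ℝ (Fin n))) (Z : Set (EuclideanSpace ℝ (Fin m)))
    (hX : Submodule.span ℝ ((fun x => ((1 : ℝ), x)) '' X) = ⊤)
    (hZ : Submodule.span ℝ ((fun z => ((1 : ℝ), z)) '' Z) = ⊤)
    (β₀ β₀' : ℝ) (β β' : EuclideanSpace ℝ (Fin n)) (γ γ' : EuclideanSpace ℝ (Fin m))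
    (S₀ S₀' : ℝ → ℝ)
    (hS₀ : ∀ t, 0 ≤ S₀ t ∧ S₀ t ≤ 1) (hS₀' : ∀ t, 0 ≤ S₀' t ∧ S₀' t ≤ 1)
    (hlim : Tendsto S₀ atTop (nhds 0)) (hlim' : Tendsto S₀' atTop (nhds 0))
    (ht₀ : ∃ t₀ : ℝ, 0 < S₀ t₀ ∧ S₀ t₀ < 1)
    (heq : ∀ x ∈ X, ∀ z ∈ Z, ∀ t : ℝ,
      Real.exp (β₀ + ⟪x, β⟫) * (1 - S₀ t ^ Real.exp ⟪z, γ⟫) =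
      Real.exp (β₀' + ⟪x, β'⟫) * (1 - S₀' t ^ Real.exp ⟪z, γ'⟫)) :
    β₀ = β₀' ∧ β = β' ∧ γ = γ' ∧ ∀ t, S₀ t = S₀' t :=
  promotion_time_identifiability_general n m X Z hX hZ β₀ β₀' β β' γ γ' S₀ S₀' hS₀ hS₀' hlim hlim'
    ht₀ heq
end

section
/- Let m ≥ 1, and let 𝒵 ⊆ ℝᵐ be such that {(1, z) : z ∈ 𝒵} spans ℝ × ℝᵐ. Let γ, γ̃ ∈ ℝᵐ and S₀, S̃₀ : ℝ → ℝ with 0 ≤ S₀(t) ≤ 1 and 0 ≤ S̃₀(t) ≤ 1 for all t, and suppose there exists t₀ with 0 < S₀(t₀) < 1. If S₀(t)^{exp(⟨z, γ⟩)} = S̃₀(t)^{exp(⟨z, γ̃⟩)} for every t ∈ ℝ and every z ∈ 𝒵, then γ = γ̃ and S₀(t) = S̃₀(t) for all t. -/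
/-!
Evaluating at a time `t₀` with `0 < S₀ t₀ < 1` and taking logarithms twice shows that
`⟪z, γ - γ'⟫` takes the same value `c` at every `z ∈ Z`. The linear functional
`(s, z) ↦ ⟪z, γ - γ'⟫ - c s` then vanishes on the spanning set `{(1, z) : z ∈ Z}`, hence
everywhere, which forces `γ = γ'`. With equal exponents, `S₀ = S₀'` by injectivity of
`x ↦ x ^ p` on `[0, ∞)` for `p ≠ 0`.
-/

open RealInnerProductSpace

namespace Real

theorem sub_eq_log_log_div_log_of_rpow_exp_eq {a b u v : ℝ} (ha₀ : 0 < a) (ha₁ : a < 1)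
    (hb : 0 ≤ b) (h : a ^ exp u = b ^ exp v) : u - v = log (log b / log a) := by
  have hb₀ : 0 < b := hb.lt_of_ne <| by
    rintro rfl
    rw [zero_rpow (exp_ne_zero v)] at h
    exact (rpow_pos_of_pos ha₀ _).ne' h
  have hlog : exp u * log a = exp v * log b := by
    rw [← log_rpow ha₀, ← log_rpow hb₀, h]
  have hratio : log b / log a = exp (u - v) := by
    rw [exp_sub, div_eq_div_iff (log_neg ha₀ ha₁).ne (exp_pos v).ne']
    linarith
  rw [hratio, log_exp]

end Real

theorem LinearMap.eq_zero_of_forall_eq_of_span_one_prod_eq_top {R M : Type*} [CommRing R]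
    [AddCommGroup M] [Module R M] {Z : Set M}
    (hZ : Submodule.span R ((fun z => ((1 : R), z)) '' Z) = ⊤) {φ : M →ₗ[R] R} {c : R}
    (hφ : ∀ z ∈ Z, φ z = c) : φ = 0 := by
  set L : R × M →ₗ[R] R := φ ∘ₗ LinearMap.snd R R M - c • LinearMap.fst R R M
  have hL : L = 0 := LinearMap.ext_on hZ <| by
    rintro _ ⟨z, hz, rfl⟩
    simp [L, hφ z hz]
  ext x
  simpa [L] using LinearMap.congr_fun hL (0, x)

theorem cox_identifiability_general (m : ℕ)
    (Z : Set (EuclideanSpace ℝ (Fin m)))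
    (hZ : Submodule.span ℝ ((fun z => ((1 : ℝ), z)) '' Z) = ⊤)
    (γ γ' : EuclideanSpace ℝ (Fin m)) (S₀ S₀' : ℝ → ℝ)
    (hS₀ : ∀ t, 0 ≤ S₀ t ∧ S₀ t ≤ 1) (hS₀' : ∀ t, 0 ≤ S₀' t ∧ S₀' t ≤ 1)
    (ht₀ : ∃ t₀ : ℝ, 0 < S₀ t₀ ∧ S₀ t₀ < 1)
    (heq : ∀ t : ℝ, ∀ z ∈ Z, S₀ t ^ Real.exp ⟪z, γ⟫ = S₀' t ^ Real.exp ⟪z, γ'⟫) :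
    γ = γ' ∧ ∀ t, S₀ t = S₀' t := by
  obtain ⟨t₀, hpos, hlt⟩ := ht₀
  have hconst (z) (hz : z ∈ Z) :
      innerₛₗ ℝ (γ - γ') z = Real.log (Real.log (S₀' t₀) / Real.log (S₀ t₀)) := by
    rw [innerₛₗ_apply_apply, real_inner_comm, inner_sub_right]
    exact Real.sub_eq_log_log_div_log_of_rpow_exp_eq hpos hlt (hS₀' t₀).1 (heq t₀ z hz)
  have hγ : γ = γ' := by
    have hzero := LinearMap.eq_zero_of_forall_eq_of_span_one_prod_eq_top hZ hconst
    rw [← sub_eq_zero, ← inner_self_eq_zero (𝕜 := ℝ)]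
    exact LinearMap.congr_fun hzero (γ - γ')
  obtain ⟨z₀, hz₀⟩ : Z.Nonempty := by
    rw [Set.nonempty_iff_ne_empty]
    rintro rfl
    simp at hZ
  refine ⟨hγ, fun t => ?_⟩
  have h := heq t z₀ hz₀
  rwa [hγ, Real.rpow_left_inj (hS₀ t).1 (hS₀' t).1 (Real.exp_ne_zero _)] at h

/-- Cox proportional hazards identifiability (step d of part A of the proof of Lemma 1):
if `S₀(t)^{exp(⟨z,γ⟩)} = S̃₀(t)^{exp(⟨z,γ̃⟩)}` for all `t` and all `z ∈ 𝒵`, where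
`{(1,z) : z ∈ 𝒵}` spans `ℝ × ℝᵐ`, `S₀, S̃₀` take values in `[0,1]`, and `S₀` takes a
value strictly between `0` and `1`, then `γ = γ̃` and `S₀ = S̃₀`. -/
theorem cox_identifiability (m : ℕ) (hm : 1 ≤ m)
    (Z : Set (EuclideanSpace ℝ (Fin m)))
    (hZ : Submodule.span ℝ ((fun z => ((1 : ℝ), z)) '' Z) = ⊤)
    (γ γ' : EuclideanSpace ℝ (Fin m)) (S₀ S₀' : ℝ → ℝ)
    (hS₀ : ∀ t, 0 ≤ S₀ t ∧ S₀ t ≤ 1) (hS₀' : ∀ t, 0 ≤ S₀' t ∧ S₀' t ≤ 1)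
    (ht₀ : ∃ t₀ : ℝ, 0 < S₀ t₀ ∧ S₀ t₀ < 1)
    (heq : ∀ t : ℝ, ∀ z ∈ Z, S₀ t ^ Real.exp ⟪z, γ⟫ = S₀' t ^ Real.exp ⟪z, γ'⟫) :
    γ = γ' ∧ ∀ t, S₀ t = S₀' t :=
  cox_identifiability_general m Z hZ γ γ' S₀ S₀' hS₀ hS₀' ht₀ heq
end

section
/- Let n, m ≥ 1, let 𝒳 ⊆ ℝⁿ be nonempty with span{x − x' : x, x' ∈ 𝒳} = ℝⁿ, and let 𝒵 ⊆ ℝᵐ be nonempty with span{z − z' : z, z' ∈ 𝒵} = ℝᵐ. Let β₀, β̃₀ ∈ ℝ, β, β̃ ∈ ℝⁿ, γ, γ̃ ∈ ℝᵐ, and F₀, F̃₀ : ℝ → ℝ, and suppose there exists t₀ with F₀(t₀) ≠ 0. If exp(β₀ + ⟨x, β⟩ + ⟨z, γ⟩) · F₀(t) = exp(β̃₀ + ⟨x, β̃⟩ + ⟨z, γ̃⟩) · F̃₀(t) for every x ∈ 𝒳, z ∈ 𝒵 and t ∈ ℝ, then β = β̃ and γ = γ̃. -/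
/-!
Fix `t₀` with `F₀ t₀ ≠ 0`. Comparing the identity at two design points `(x, z)` and `(x', z')`
cancels both `F₀ t₀` (and `F₀' t₀`) and the intercepts, so the linear predictors of the two
parametrisations differ by a constant. Hence `β - β'` is orthogonal to every difference `x - x'`
and `γ - γ'` to every `z - z'`; since these differences span, both vanish.
-/

open RealInnerProductSpace

section InnerProduct

variable {E : Type*} [NormedAddCommGroup E] [InnerProductSpace ℝ E]

theorem eq_of_forall_inner_eq_of_span_eq_top {s : Set E} (hs : Submodule.span ℝ s = ⊤)
    {v w : E} (h : ∀ d ∈ s, ⟪d, v⟫ = ⟪d, w⟫) : v = w := by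
  have hvw : innerₛₗ ℝ v = innerₛₗ ℝ w :=
    LinearMap.ext_on hs fun d hd => by
      simpa only [innerₛₗ_apply_apply, real_inner_comm] using h d hd
  exact ext_inner_right ℝ fun u => LinearMap.congr_fun hvw u

theorem eq_of_forall_inner_sub_eq {X : Set E}
    (hX : Submodule.span ℝ {d : E | ∃ x ∈ X, ∃ x' ∈ X, d = x - x'} = ⊤) {v w : E}
    (h : ∀ x ∈ X, ∀ x' ∈ X, ⟪x, v⟫ - ⟪x', v⟫ = ⟪x, w⟫ - ⟪x', w⟫) : v = w :=
  eq_of_forall_inner_eq_of_span_eq_top hX <| by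
    rintro _ ⟨x, hx, x', hx', rfl⟩
    simpa only [inner_sub_left] using h x hx x' hx'

end InnerProduct

theorem sub_eq_sub_of_exp_mul_eq {a a' b b' c c' : ℝ} (hc : c ≠ 0)
    (ha : Real.exp a * c = Real.exp a' * c') (hb : Real.exp b * c = Real.exp b' * c') :
    a - b = a' - b' := by
  have hc' : c' ≠ 0 := right_ne_zero_of_mul (ha ▸ mul_ne_zero (Real.exp_ne_zero a) hc)
  apply Real.exp_injective
  calc Real.exp (a - b) = Real.exp a * c / (Real.exp b * c) := by
        rw [Real.exp_sub, mul_div_mul_right _ _ hc]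
    _ = Real.exp a' * c' / (Real.exp b' * c') := by rw [ha, hb]
    _ = Real.exp (a' - b') := by rw [Real.exp_sub, mul_div_mul_right _ _ hc']

theorem covariate_effects_identifiable_general (n m : ℕ)
    (X : Set (EuclideanSpace ℝ (Fin n))) (hXne : X.Nonempty)
    (hX : Submodule.span ℝ {d : EuclideanSpace ℝ (Fin n) |
      ∃ x ∈ X, ∃ x' ∈ X, d = x - x'} = ⊤)
    (Z : Set (EuclideanSpace ℝ (Fin m))) (hZne : Z.Nonempty)
    (hZ : Submodule.span ℝ {d : EuclideanSpace ℝ (Fin m) |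
      ∃ z ∈ Z, ∃ z' ∈ Z, d = z - z'} = ⊤)
    (β₀ β₀' : ℝ) (β β' : EuclideanSpace ℝ (Fin n)) (γ γ' : EuclideanSpace ℝ (Fin m))
    (F₀ F₀' : ℝ → ℝ) (ht₀ : ∃ t₀ : ℝ, F₀ t₀ ≠ 0)
    (heq : ∀ x ∈ X, ∀ z ∈ Z, ∀ t : ℝ,
      Real.exp (β₀ + ⟪x, β⟫ + ⟪z, γ⟫) * F₀ t =
      Real.exp (β₀' + ⟪x, β'⟫ + ⟪z, γ'⟫) * F₀' t) :
    β = β' ∧ γ = γ' := by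
  obtain ⟨t₀, hF⟩ := ht₀
  obtain ⟨x₀, hx₀⟩ := hXne
  obtain ⟨z₀, hz₀⟩ := hZne
  have hdiff : ∀ x ∈ X, ∀ z ∈ Z, ∀ x' ∈ X, ∀ z' ∈ Z,
      (⟪x, β⟫ + ⟪z, γ⟫) - (⟪x', β⟫ + ⟪z', γ⟫) =
        (⟪x, β'⟫ + ⟪z, γ'⟫) - (⟪x', β'⟫ + ⟪z', γ'⟫) := by
    intro x hx z hz x' hx' z' hz'
    have := sub_eq_sub_of_exp_mul_eq hF (heq x hx z hz t₀) (heq x' hx' z' hz' t₀)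
    linarith
  exact ⟨eq_of_forall_inner_sub_eq hX fun x hx x' hx' => by
      linarith [hdiff x hx z₀ hz₀ x' hx' z₀ hz₀],
    eq_of_forall_inner_sub_eq hZ fun z hz z' hz' => by
      linarith [hdiff x₀ hx₀ z hz x₀ hx₀ z' hz']⟩

/-- Positive claim of part 2 of the paper's Lemma 1: in the approximate model
`S_p(t|x,z) = exp(−exp(β₀+⟨x,β⟩+⟨z,γ⟩) F₀(t))`, if the differences of the design
points span the covariate spaces and `F₀` is not identically zero, then the covariate
effects `β` and `γ` are identifiable (even though `β₀` and `F₀` are confounded). -/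
theorem covariate_effects_identifiable (n m : ℕ) (hn : 1 ≤ n) (hm : 1 ≤ m)
    (X : Set (EuclideanSpace ℝ (Fin n))) (hXne : X.Nonempty)
    (hX : Submodule.span ℝ {d : EuclideanSpace ℝ (Fin n) |
      ∃ x ∈ X, ∃ x' ∈ X, d = x - x'} = ⊤)
    (Z : Set (EuclideanSpace ℝ (Fin m))) (hZne : Z.Nonempty)
    (hZ : Submodule.span ℝ {d : EuclideanSpace ℝ (Fin m) |
      ∃ z ∈ Z, ∃ z' ∈ Z, d = z - z'} = ⊤)
    (β₀ β₀' : ℝ) (β β' : EuclideanSpace ℝ (Fin n)) (γ γ' : EuclideanSpace ℝ (Fin m))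
    (F₀ F₀' : ℝ → ℝ) (ht₀ : ∃ t₀ : ℝ, F₀ t₀ ≠ 0)
    (heq : ∀ x ∈ X, ∀ z ∈ Z, ∀ t : ℝ,
      Real.exp (β₀ + ⟪x, β⟫ + ⟪z, γ⟫) * F₀ t =
      Real.exp (β₀' + ⟪x, β'⟫ + ⟪z, γ'⟫) * F₀' t) :
    β = β' ∧ γ = γ' :=
  covariate_effects_identifiable_general n m X hXne hX Z hZne hZ β₀ β₀' β β' γ γ' F₀ F₀' ht₀ heq
end
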